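/- arXiv:2506.08287 — 2 statements merged into one kernel-verified Lean document; each statement's English description precedes it below -/
import Mathlib

section
/- Let U be a countably complete ultrafilter on a set I (i.e., U is closed under countable intersections), and let r be a well-founded relation on a set A. Then the relation induced on the ultraproduct (∏ᵢ A)/U, defined by [f] R [g] iff {i ∈ I : r (f i) (g i)} ∈ U, is well-founded. -/
open Filter

/-- If `U` is a countably complete ultrafilter on `I` and `r` is a well-founded
relation on `A`, then the induced relation on the ultraproduct (the germ space
`(I → A)/U`), given by `[f] R [g]` iff `{i | r (f i) (g i)} ∈ U`, is well-founded. -/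
theorem ultraproduct_wellFounded {I A : Type*} (U : Ultrafilter I)
    (hcc : ∀ s : ℕ → Set I, (∀ n, s n ∈ U) → (⋂ n, s n) ∈ U)
    (r : A → A → Prop) (hwf : WellFounded r) :
    WellFounded (fun f g : Filter.Germ (U : Filter I) A => Filter.Germ.LiftRel r f g) := by
  set R : Germ (U : Filter I) A → Germ (U : Filter I) A → Prop :=
    fun f g => Filter.Germ.LiftRel r f g with hR
  by_contra h
  have hex : ∃ x, ¬Acc R x := by
    by_contra hx
    push_neg at hx
    exact h ⟨hx⟩
  obtain ⟨x, hx⟩ := hex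
  have step : ∀ y, ¬Acc R y → ∃ z, R z y ∧ ¬Acc R z := by
    intro y hy
    by_contra hz
    push_neg at hz
    exact hy (Acc.intro y fun z hzy => by
      by_contra hacc
      exact hacc (hz z hzy))
  -- build a descending sequence of germs
  let F : {y // ¬Acc R y} → {y // ¬Acc R y} := fun p =>
    ⟨Classical.choose (step p.1 p.2), (Classical.choose_spec (step p.1 p.2)).2⟩
  let g : ℕ → {y // ¬Acc R y} := fun n => F^[n] ⟨x, hx⟩
  have hg : ∀ n, R (g (n + 1)).1 (g n).1 := by
    intro n
    have hstep : g (n + 1) = F (g n) := Function.iterate_succ_apply' F n _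
    rw [hstep]
    exact (Classical.choose_spec (step (g n).1 (g n).2)).1
  -- representatives
  set f : ℕ → I → A := fun n => Quotient.out (g n).1 with hf
  have hrep : ∀ n, (↑(f n) : Filter.Germ (U : Filter I) A) = (g n).1 :=
    fun n => Quotient.out_eq _
  have hstep : ∀ n, {i | r (f (n + 1) i) (f n i)} ∈ U := by
    intro n
    have h1 : Filter.Germ.LiftRel r ((f (n + 1) : I → A) : Germ (U : Filter I) A) ((f n : I → A) : Germ (U : Filter I) A) := by
      rw [hrep, hrep]; exact hg n
    exact Filter.Germ.liftRel_coe.mp h1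
  have hmem : (⋂ n, {i | r (f (n + 1) i) (f n i)}) ∈ U := hcc _ hstep
  obtain ⟨i, hi⟩ := Filter.nonempty_of_mem hmem
  simp only [Set.mem_iInter, Set.mem_setOf_eq] at hi
  -- descending sequence in A contradicts hwf
  have key : ∀ b, Acc r b → ∀ n, f n i ≠ b := by
    intro b hb
    induction hb with
    | intro b _ ih =>
      intro n hn
      exact ih (f (n + 1) i) (hn ▸ hi n) (n + 1) rfl
  exact key (f 0 i) (hwf.apply _) 0 rfl
end

section
/- Let ρ be an ordinal and U an ultrafilter on a set I with |I| < cf(ρ). Then the order type of the ultraproduct (∏ᵢ ρ)/U (which is a linear order; assume additionally U countably complete so that it is a well-order) has cofinality equal to cf(ρ). -/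
/-!
The diagonal embedding `β ↦ [const β]` of `ρ` into `(∏ᵢ ρ)/U` is strictly monotone, and it is
cofinal because the supremum of the `|I| < cf ρ` values of a representative stays below `ρ`.
A strictly monotone map with cofinal range between linear orders preserves cofinality.
-/

open Filter Cardinal Set

universe u

theorem Filter.Germ.isCofinal_range_const_of_mk_lt_cof {I : Type u} {l : Filter I}
    {ρ : Ordinal.{u}} (hI : #I < ρ.cof) :
    IsCofinal (range ((↑) : Iio ρ → Germ l (Iio ρ))) := by
  intro g
  induction g using Germ.inductionOn with
  | h f =>
    refine ⟨_, mem_range_self ⟨⨆ i, (f i).1, Ordinal.iSup_lt_of_lt_cof hI fun i ↦ (f i).2⟩, ?_⟩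
    exact Germ.coe_le.2 <| .of_forall fun i ↦ Ordinal.le_iSup (fun i ↦ (f i).1) i

theorem Filter.Germ.cof_eq_lift_cof_of_mk_lt_cof {I : Type u} (U : Ultrafilter I)
    {ρ : Ordinal.{u}} (hI : #I < ρ.cof) :
    Order.cof (Germ (U : Filter I) (Iio ρ)) = lift.{u + 1} ρ.cof := by
  rw [← Order.cof_congr_of_strictMono (fun _ _ ↦ Germ.const_lt)
    (isCofinal_range_const_of_mk_lt_cof hI), Ordinal.cof_Iio, Ordinal.lift_cof]

theorem ultraproduct_cof_eq_general {I : Type u} (ρ : Ordinal.{u}) (U : Ultrafilter I)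
    (hlt : Cardinal.mk I < ρ.cof)
    [inst : IsWellOrder (Filter.Germ (U : Filter I) {β : Ordinal.{u} // β < ρ})
      (· < ·)] :
    (Ordinal.type ((· < ·) :
        Filter.Germ (U : Filter I) {β : Ordinal.{u} // β < ρ} →
        Filter.Germ (U : Filter I) {β : Ordinal.{u} // β < ρ} → Prop)).cof =
      Cardinal.lift.{u + 1} ρ.cof := by
  rw [Ordinal.cof_type]
  exact Germ.cof_eq_lift_cof_of_mk_lt_cof U hlt

/-- If `|I| < cf ρ` and `U` is a countably complete ultrafilter on `I` (so that the
linearly ordered ultraproduct `(∏ᵢ ρ)/U` is a well-order), then the order type of the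
ultraproduct has cofinality `cf ρ`. -/
theorem ultraproduct_cof_eq {I : Type u} (ρ : Ordinal.{u}) (U : Ultrafilter I)
    (hlt : Cardinal.mk I < ρ.cof)
    (hcc : ∀ s : ℕ → Set I, (∀ n, s n ∈ U) → (⋂ n, s n) ∈ U)
    [inst : IsWellOrder (Filter.Germ (U : Filter I) {β : Ordinal.{u} // β < ρ})
      (· < ·)] :
    (Ordinal.type ((· < ·) :
        Filter.Germ (U : Filter I) {β : Ordinal.{u} // β < ρ} →
        Filter.Germ (U : Filter I) {β : Ordinal.{u} // β < ρ} → Prop)).cof =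
      Cardinal.lift.{u + 1} ρ.cof :=
  ultraproduct_cof_eq_general ρ U hlt (inst := inst)
end
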